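/- arXiv:0909.0851 — 4 statements merged into one kernel-verified Lean document; each statement's English description precedes it below -/
import Mathlib

section
/- Let d ∈ ℕ, d ≥ 1. A linear mapping 𝐀 : S_d → S_d satisfies exp(t𝐀)(S_d^+) = S_d^+ for all t ∈ ℝ^+ (i.e., for every t ≥ 0 the operator exponential exp(t𝐀) maps the positive semidefinite cone onto itself) if and only if there exists a matrix A ∈ M_d(ℝ) such that 𝐀X = AX + XAᵀ for all X ∈ S_d. -/
open Matrix

attribute [local instance] Matrix.frobeniusNormedAddCommGroup Matrix.frobeniusNormedSpace

/-- The linear subspace `S_d` of symmetric `d × d` real matrices. -/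
def symMatrices (d : ℕ) : Submodule ℝ (Matrix (Fin d) (Fin d) ℝ) where
  carrier := {X | X.IsSymm}
  add_mem' hX hY := hX.add hY
  zero_mem' := Matrix.isSymm_zero
  smul_mem' c _ hX := hX.smul c

/-- The operator exponential `exp(t𝒜)` of a linear operator `𝒜 : S_d → S_d`
(all linear operators on the finite-dimensional space `S_d` are continuous). -/
noncomputable def opExp {d : ℕ} (A : symMatrices d →ₗ[ℝ] symMatrices d) (t : ℝ) :
    symMatrices d →ₗ[ℝ] symMatrices d :=
  (@NormedSpace.exp _ _ _ (@NonUnitalSeminormedRing.toIsTopologicalRing _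
    ContinuousLinearMap.toSeminormedRing.toNonUnitalSeminormedRing)
    (t • LinearMap.toContinuousLinearMap A)).toLinearMap

/-- The positive semidefinite cone `S_d^+` inside `S_d`. -/
def psdCone (d : ℕ) : Set (symMatrices d) :=
  {Z : symMatrices d | (Z : Matrix (Fin d) (Fin d) ℝ).PosSemidef}

/-!
If `exp(t𝒜)` maps `S_d^+` onto itself for every `t ≥ 0`, the group law makes every `exp(t𝒜)`,
`t ∈ ℝ`, map the cone into itself. For `x ⊥ y` the function `t ↦ yᵀ exp(t𝒜)(xxᵀ) y` is then
nonnegative and vanishes at `t = 0`, so its derivative `yᵀ 𝒜(xxᵀ) y` vanishes: `𝒜` is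
Lyapunov-like. Polarizing, `𝒜(xxᵀ)` vanishes as a bilinear form on `x^⊥`, which forces
`𝒜(xxᵀ) = wxᵀ + xwᵀ`. Taking `A` with columns read off from `𝒜(eᵢeᵢᵀ)`, the difference
`𝒜 - (X ↦ AX + XAᵀ)` is Lyapunov-like and kills every `eᵢeᵢᵀ`; restricting it to the lines
`eᵢ + s eⱼ` shows that it kills `eᵢeⱼᵀ + eⱼeᵢᵀ` as well, so it is zero.

Conversely `exp(t(X ↦ AX + XAᵀ))` is the congruence `X ↦ e^{tA} X (e^{tA})ᵀ`, which maps `S_d^+`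
into itself for every `t ∈ ℝ`, hence onto itself by the group law.
-/

open NormedSpace Set

section OneParameterGroup

variable {E : Type*} [NormedAddCommGroup E] [NormedSpace ℝ E] [CompleteSpace E]

theorem exp_add_smul_apply (T : E →L[ℝ] E) (s t : ℝ) (x : E) :
    exp ((s + t) • T) x = exp (s • T) (exp (t • T) x) := by
  let +nondep : NormedAlgebra ℚ (E →L[ℝ] E) := .restrictScalars ℚ ℝ _
  rw [add_smul, exp_add_of_commute (((Commute.refl T).smul_left s).smul_right t)]
  rfl

theorem forall_image_exp_smul_eq_iff (T : E →L[ℝ] E) (K : Set E) :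
    (∀ t : ℝ, 0 ≤ t → ⇑(exp (t • T)) '' K = K) ↔ ∀ t : ℝ, MapsTo ⇑(exp (t • T)) K K := by
  have cancel : ∀ (t : ℝ) (x : E), exp (t • T) (exp ((-t) • T) x) = x := fun t x => by
    rw [← exp_add_smul_apply, add_neg_cancel, zero_smul, exp_zero]
    rfl
  constructor
  · intro h t
    rcases le_total 0 t with ht | ht
    · exact mapsTo_iff_image_subset.2 (h t ht).le
    · intro x hx
      obtain ⟨y, hy, rfl⟩ : x ∈ ⇑(exp ((-t) • T)) '' K := (h (-t) (neg_nonneg.2 ht)).symm ▸ hx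
      rwa [cancel]
  · intro h t _
    refine (h t).image_subset.antisymm fun x hx => ⟨_, h (-t) hx, cancel t x⟩

theorem hasDerivAt_exp_smul_apply (T : E →L[ℝ] E) (x : E) :
    HasDerivAt (fun t : ℝ => exp (t • T) x) (T x) 0 := by
  have h := (hasDerivAt_exp_smul_const (𝕂 := ℝ) T 0).clm_apply (hasDerivAt_const (0 : ℝ) x)
  simpa using h

theorem map_apply_eq_zero_of_mapsTo_exp_smul (T : E →L[ℝ] E) {K : Set E}
    (hK : ∀ t : ℝ, MapsTo ⇑(exp (t • T)) K K) (φ : E →L[ℝ] ℝ) (hφ : ∀ z ∈ K, 0 ≤ φ z)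
    {x : E} (hx : x ∈ K) (hφx : φ x = 0) : φ (T x) = 0 := by
  have hmin : IsLocalMin (fun t : ℝ => φ (exp (t • T) x)) 0 :=
    Filter.Eventually.of_forall fun t => by
      simpa [hφx] using hφ _ (hK t hx)
  exact hmin.hasDerivAt_eq_zero (φ.hasFDerivAt.comp_hasDerivAt 0 (hasDerivAt_exp_smul_apply T x))

theorem exp_apply_map_eq_map_exp_apply {F : Type*} [NormedAddCommGroup F] [NormedSpace ℝ F]
    [CompleteSpace F] (f : E →L[ℝ] F) {a : E →L[ℝ] E} {b : F →L[ℝ] F}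
    (h : ∀ x, b (f x) = f (a x)) (x : E) : exp b (f x) = f (exp a x) := by
  have hcomp : b.comp f = f.comp a := ContinuousLinearMap.ext h
  have hpow : ∀ n : ℕ, (b ^ n).comp f = f.comp (a ^ n) := fun n => by
    induction n with
    | zero => rfl
    | succ n ih =>
      rw [pow_succ, pow_succ, ContinuousLinearMap.mul_def, ContinuousLinearMap.mul_def,
        ContinuousLinearMap.comp_assoc, hcomp, ← ContinuousLinearMap.comp_assoc, ih,
        ContinuousLinearMap.comp_assoc]
  have hb := (expSeries_summable' (𝕂 := ℝ) b).hasSum.mapL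
    ((ContinuousLinearMap.compL ℝ E F F).flip f)
  have ha := (expSeries_summable' (𝕂 := ℝ) a).hasSum.mapL (ContinuousLinearMap.compL ℝ E E F f)
  have hexp : (exp b).comp f = f.comp (exp a) := by
    rw [exp_eq_tsum ℝ, exp_eq_tsum ℝ]
    refine hb.unique ?_
    simpa [hpow] using ha
  exact congr($hexp x)

end OneParameterGroup

section LeftRightMultiplication

variable {R : Type*} [NormedRing R] [NormedAlgebra ℝ R]

noncomputable def mulLeftRingHom : R →+* (R →L[ℝ] R) where
  toFun := ContinuousLinearMap.mul ℝ R
  map_one' := by ext; simp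
  map_mul' a b := by ext; simp [mul_assoc]
  map_zero' := by simp
  map_add' := by simp

noncomputable def mulRightRingHom : Rᵐᵒᵖ →+* (R →L[ℝ] R) where
  toFun b := (ContinuousLinearMap.mul ℝ R).flip b.unop
  map_one' := by ext; simp
  map_mul' a b := by ext; simp [mul_assoc]
  map_zero' := by ext; simp
  map_add' a b := by ext; simp

theorem exp_mulLeftRingHom_add_mulRightRingHom_apply [CompleteSpace R] (a b z : R) :
    exp (mulLeftRingHom a + mulRightRingHom (MulOpposite.op b)) z = exp a * z * exp b := by
  let +nondep : NormedAlgebra ℚ R := .restrictScalars ℚ ℝ R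
  let +nondep : NormedAlgebra ℚ (R →L[ℝ] R) := .restrictScalars ℚ ℝ _
  have hcomm : Commute (mulLeftRingHom a) (mulRightRingHom (MulOpposite.op b)) := by
    ext; simp [mulLeftRingHom, mulRightRingHom, mul_assoc]
  rw [exp_add_of_commute hcomm,
    ← map_exp mulLeftRingHom (ContinuousLinearMap.mul ℝ R).continuous, ← map_exp mulRightRingHom
      ((ContinuousLinearMap.mul ℝ R).flip.continuous.comp MulOpposite.continuous_unop), exp_op]
  simp [mulLeftRingHom, mulRightRingHom, mul_assoc]

end LeftRightMultiplication

section RankTwo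

variable {n : Type*}

theorem Matrix.isSymm_vecMulVec_add_vecMulVec (u v : n → ℝ) :
    (vecMulVec u v + vecMulVec v u).IsSymm := by
  simpa [transpose_vecMulVec] using isSymm_add_transpose_self (vecMulVec u v)

variable [Fintype n]

theorem Matrix.IsSymm.dotProduct_mulVec_comm {P : Matrix n n ℝ} (hP : P.IsSymm) (u v : n → ℝ) :
    u ⬝ᵥ P *ᵥ v = v ⬝ᵥ P *ᵥ u := by
  rw [dotProduct_mulVec, ← mulVec_transpose, hP.eq, dotProduct_comm]

theorem Matrix.IsSymm.dotProduct_mulVec_eq_zero_of_orthogonal {P : Matrix n n ℝ} (hP : P.IsSymm)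
    {x : n → ℝ} (h : ∀ y, x ⬝ᵥ y = 0 → y ⬝ᵥ P *ᵥ y = 0) {p q : n → ℝ} (hp : x ⬝ᵥ p = 0)
    (hq : x ⬝ᵥ q = 0) : q ⬝ᵥ P *ᵥ p = 0 := by
  have hpq := h (p + q) (by rw [dotProduct_add, hp, hq, add_zero])
  simp only [mulVec_add, dotProduct_add, add_dotProduct, h p hp, h q hq,
    hP.dotProduct_mulVec_comm p q] at hpq
  linarith

theorem dotProduct_sub_smul_eq_zero {x : n → ℝ} (hx : x ≠ 0) (a : n → ℝ) :
    x ⬝ᵥ (a - ((x ⬝ᵥ a) / (x ⬝ᵥ x)) • x) = 0 := by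
  have : x ⬝ᵥ x ≠ 0 := by rwa [Ne, dotProduct_self_eq_zero]
  rw [dotProduct_sub, dotProduct_smul, smul_eq_mul, div_mul_cancel₀ _ this, sub_self]

theorem Matrix.IsSymm.eq_zero_of_mulVec_eq_zero {D : Matrix n n ℝ} (hD : D.IsSymm) {x : n → ℝ}
    (hx : x ≠ 0) (hDx : D *ᵥ x = 0)
    (h : ∀ p q, x ⬝ᵥ p = 0 → x ⬝ᵥ q = 0 → q ⬝ᵥ D *ᵥ p = 0) : D = 0 := by
  refine ext_iff_mulVec.2 fun a => ?_
  set p := a - ((x ⬝ᵥ a) / (x ⬝ᵥ x)) • x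
  have hp : x ⬝ᵥ p = 0 := dotProduct_sub_smul_eq_zero hx a
  have hDa : D *ᵥ a = D *ᵥ p := by simp [p, mulVec_sub, mulVec_smul, hDx]
  have hDp : x ⬝ᵥ D *ᵥ p = 0 := by rw [hD.dotProduct_mulVec_comm, hDx, dotProduct_zero]
  rw [hDa, zero_mulVec, ← dotProduct_self_eq_zero]
  exact h p _ hp hDp

theorem Matrix.IsSymm.exists_eq_vecMulVec_add_vecMulVec {P : Matrix n n ℝ} (hP : P.IsSymm)
    {x : n → ℝ} (hx : x ≠ 0) (h : ∀ p q, x ⬝ᵥ p = 0 → x ⬝ᵥ q = 0 → q ⬝ᵥ P *ᵥ p = 0) :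
    ∃ w, P = vecMulVec w x + vecMulVec x w := by
  set N := x ⬝ᵥ x
  have hN : N ≠ 0 := by rwa [Ne, dotProduct_self_eq_zero]
  set m := P *ᵥ x
  -- solves `N • w + (w ⬝ᵥ x) • x = m`, i.e. `(wxᵀ + xwᵀ) x = P x`
  set w := N⁻¹ • m - ((x ⬝ᵥ m) / (2 * N ^ 2)) • x
  refine ⟨w, sub_eq_zero.1 ?_⟩
  have hwx : w ⬝ᵥ x = (x ⬝ᵥ m) / (2 * N) := by
    simp only [w, sub_dotProduct, smul_dotProduct, smul_eq_mul, dotProduct_comm m x]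
    field_simp
    ring
  refine (hP.sub (isSymm_vecMulVec_add_vecMulVec w x)).eq_zero_of_mulVec_eq_zero hx ?_
    fun p q hp hq => ?_
  · have hNw : N • w = m - ((x ⬝ᵥ m) / (2 * N)) • x := by
      simp only [w, smul_sub, smul_smul]
      rw [mul_inv_cancel₀ hN, one_smul]
      congr 2
      field_simp
    simp only [sub_mulVec, add_mulVec, vecMulVec_mulVec, op_smul_eq_smul, hwx]
    rw [hNw]
    abel
  · simp [sub_mulVec, add_mulVec, vecMulVec_mulVec, h p q hp hq, dotProduct_comm q x, hp, hq]
end RankTwo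

section SymmetricMatrices

variable {d : ℕ}

noncomputable def lyapunovMap (A : Matrix (Fin d) (Fin d) ℝ) :
    symMatrices d →ₗ[ℝ] symMatrices d where
  toFun X := ⟨A * X + X * Aᵀ, by
    have hX : (X : Matrix (Fin d) (Fin d) ℝ).IsSymm := X.2
    show IsSymm _
    simpa [transpose_mul, hX.eq] using
      isSymm_add_transpose_self (A * (X : Matrix (Fin d) (Fin d) ℝ))⟩
  map_add' X Y := Subtype.ext <| by simp only [Submodule.coe_add, mul_add, add_mul]; abel
  map_smul' c X := Subtype.ext <| by simp [smul_add]

@[simp] theorem coe_lyapunovMap_apply (A : Matrix (Fin d) (Fin d) ℝ) (X : symMatrices d) :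
    (lyapunovMap A X : Matrix (Fin d) (Fin d) ℝ) = A * X + X * Aᵀ := rfl

attribute [local instance] Matrix.frobeniusNormedRing Matrix.frobeniusNormedAlgebra in
theorem coe_opExp_lyapunovMap_apply (A : Matrix (Fin d) (Fin d) ℝ) (t : ℝ) (X : symMatrices d) :
    (opExp (lyapunovMap A) t X : Matrix (Fin d) (Fin d) ℝ) =
      exp (t • A) * X * (exp (t • A))ᵀ := by
  have h := exp_apply_map_eq_map_exp_apply (symMatrices d).subtypeL
    (a := t • LinearMap.toContinuousLinearMap (lyapunovMap A))
    (b := mulLeftRingHom (t • A) + mulRightRingHom (MulOpposite.op (t • A)ᵀ))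
    (fun X => by
      change (t • A) * X + X * (t • A)ᵀ = t • (A * X + X * Aᵀ)
      simp [smul_add]) X
  rw [exp_mulLeftRingHom_add_mulRightRingHom_apply] at h
  rw [← Matrix.exp_transpose]
  exact h.symm

theorem mapsTo_opExp_lyapunovMap_psdCone (A : Matrix (Fin d) (Fin d) ℝ) (t : ℝ) :
    MapsTo (opExp (lyapunovMap A) t) (psdCone d) (psdCone d) := by
  intro X hX
  have h := (show (X : Matrix (Fin d) (Fin d) ℝ).PosSemidef from hX).mul_mul_conjTranspose_same
    (exp (t • A))
  rwa [conjTranspose_eq_transpose_of_trivial, ← coe_opExp_lyapunovMap_apply] at h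

noncomputable def symOuter (d : ℕ) : (Fin d → ℝ) →ₗ[ℝ] (Fin d → ℝ) →ₗ[ℝ] symMatrices d :=
  LinearMap.mk₂ ℝ
    (fun u v => ⟨vecMulVec u v + vecMulVec v u, isSymm_vecMulVec_add_vecMulVec u v⟩)
    (fun u u' v => Subtype.ext <| by
      simp only [add_vecMulVec, vecMulVec_add, Submodule.coe_add]; abel)
    (fun c u v => Subtype.ext <| by simp [smul_vecMulVec, vecMulVec_smul])
    (fun u v v' => Subtype.ext <| by
      simp only [add_vecMulVec, vecMulVec_add, Submodule.coe_add]; abel)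
    (fun c u v => Subtype.ext <| by simp [smul_vecMulVec, vecMulVec_smul])

@[simp] theorem coe_symOuter (u v : Fin d → ℝ) :
    (symOuter d u v : Matrix (Fin d) (Fin d) ℝ) = vecMulVec u v + vecMulVec v u := rfl

theorem symOuter_comm (u v : Fin d → ℝ) : symOuter d u v = symOuter d v u :=
  Subtype.ext (add_comm _ _)

theorem sum_symOuter_single (X : symMatrices d) :
    ∑ i, ∑ j, ((X : Matrix (Fin d) (Fin d) ℝ) i j / 2) •
      symOuter d (Pi.single i 1) (Pi.single j 1) = X := by
  have hX : ∀ i j, (X : Matrix (Fin d) (Fin d) ℝ) j i = (X : Matrix (Fin d) (Fin d) ℝ) i j :=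
    fun i j => congr_fun (congr_fun X.2 i) j
  ext k l
  simp [Matrix.sum_apply, vecMulVec_apply, Pi.single_apply, Finset.sum_add_distrib, hX l k]

theorem LinearMap.ext_symOuter_single {N : Type*} [AddCommGroup N] [Module ℝ N]
    {f g : symMatrices d →ₗ[ℝ] N}
    (h : ∀ i j, f (symOuter d (Pi.single i 1) (Pi.single j 1)) =
      g (symOuter d (Pi.single i 1) (Pi.single j 1))) : f = g := by
  ext X
  rw [← sum_symOuter_single X]
  simp [map_sum, h]

theorem lyapunovMap_symOuter (A : Matrix (Fin d) (Fin d) ℝ) (u v : Fin d → ℝ) :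
    lyapunovMap A (symOuter d u v) = symOuter d (A *ᵥ u) v + symOuter d u (A *ᵥ v) := by
  ext1
  simp only [coe_lyapunovMap_apply, coe_symOuter, Submodule.coe_add, mul_add, add_mul,
    mul_vecMulVec, vecMulVec_mul, vecMul_transpose]
  abel

/-- The Lyapunov-like property of `𝒜` on the cone `S_d^+` (`⟨𝒜 X, Y⟩ = 0` whenever `X, Y ⪰ 0`
and `⟨X, Y⟩ = 0`), tested on the extreme rays `X = 2xxᵀ`, `Y = yyᵀ`. -/
def IsLyapunovLike (𝒜 : symMatrices d →ₗ[ℝ] symMatrices d) : Prop :=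
  ∀ x y : Fin d → ℝ, x ⬝ᵥ y = 0 →
    y ⬝ᵥ (𝒜 (symOuter d x x) : Matrix (Fin d) (Fin d) ℝ) *ᵥ y = 0

theorem isLyapunovLike_of_mapsTo_opExp {𝒜 : symMatrices d →ₗ[ℝ] symMatrices d}
    (h : ∀ t, MapsTo (opExp 𝒜 t) (psdCone d) (psdCone d)) : IsLyapunovLike 𝒜 := by
  intro x y hxy
  let φ : symMatrices d →ₗ[ℝ] ℝ :=
    { toFun Z := y ⬝ᵥ (Z : Matrix (Fin d) (Fin d) ℝ) *ᵥ y
      map_add' Z Z' := by simp [add_mulVec]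
      map_smul' c Z := by simp [smul_mulVec] }
  refine map_apply_eq_zero_of_mapsTo_exp_smul (LinearMap.toContinuousLinearMap 𝒜) h
    (LinearMap.toContinuousLinearMap φ) (fun Z hZ => ?_) (x := symOuter d x x) ?_ ?_
  · simpa [φ] using
      (show (Z : Matrix (Fin d) (Fin d) ℝ).PosSemidef from hZ).dotProduct_mulVec_nonneg y
  · have hxx := posSemidef_vecMulVec_self_star x
    exact hxx.add hxx
  · simp [φ, add_mulVec, vecMulVec_mulVec, hxy]

theorem isLyapunovLike_lyapunovMap (A : Matrix (Fin d) (Fin d) ℝ) :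
    IsLyapunovLike (lyapunovMap A) := by
  intro x y hxy
  have hyx : y ⬝ᵥ x = 0 := by rwa [dotProduct_comm]
  simp [lyapunovMap_symOuter, add_mulVec, vecMulVec_mulVec, hxy, hyx]

theorem IsLyapunovLike.sub {𝒜 ℬ : symMatrices d →ₗ[ℝ] symMatrices d}
    (h𝒜 : IsLyapunovLike 𝒜) (hℬ : IsLyapunovLike ℬ) : IsLyapunovLike (𝒜 - ℬ) := by
  intro x y hxy
  simp [sub_mulVec, h𝒜 x y hxy, hℬ x y hxy]

theorem IsLyapunovLike.dotProduct_mulVec_eq_zero {𝒜 : symMatrices d →ₗ[ℝ] symMatrices d}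
    (h𝒜 : IsLyapunovLike 𝒜) {x p q : Fin d → ℝ} (hp : x ⬝ᵥ p = 0) (hq : x ⬝ᵥ q = 0) :
    q ⬝ᵥ (𝒜 (symOuter d x x) : Matrix (Fin d) (Fin d) ℝ) *ᵥ p = 0 :=
  IsSymm.dotProduct_mulVec_eq_zero_of_orthogonal (𝒜 _).2 (h𝒜 x) hp hq

theorem IsLyapunovLike.exists_eq_symOuter {𝒜 : symMatrices d →ₗ[ℝ] symMatrices d}
    (h𝒜 : IsLyapunovLike 𝒜) {x : Fin d → ℝ} (hx : x ≠ 0) :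
    ∃ w, 𝒜 (symOuter d x x) = symOuter d w x := by
  obtain ⟨w, hw⟩ := IsSymm.exists_eq_vecMulVec_add_vecMulVec (𝒜 _).2 hx
    fun p q hp hq => h𝒜.dotProduct_mulVec_eq_zero hp hq
  exact ⟨w, Subtype.ext hw⟩

theorem IsLyapunovLike.symOuter_eq_zero {𝒜 : symMatrices d →ₗ[ℝ] symMatrices d}
    (h𝒜 : IsLyapunovLike 𝒜) {u v : Fin d → ℝ} (hu : u ⬝ᵥ u = 1) (hv : v ⬝ᵥ v = 1)
    (huv : u ⬝ᵥ v = 0) (h𝒜u : 𝒜 (symOuter d u u) = 0) (h𝒜v : 𝒜 (symOuter d v v) = 0) :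
    𝒜 (symOuter d u v) = 0 := by
  have hvu : v ⬝ᵥ u = 0 := by rwa [dotProduct_comm]
  set M : Matrix (Fin d) (Fin d) ℝ := ↑(𝒜 (symOuter d u v))
  have hM : M.IsSymm := (𝒜 _).2
  have hne : ∀ s : ℝ, u + s • v ≠ 0 := fun s h => by
    simpa [dotProduct_add, hu, huv] using congrArg (u ⬝ᵥ ·) h
  have hline : ∀ s : ℝ,
      𝒜 (symOuter d (u + s • v) (u + s • v)) = (2 * s) • 𝒜 (symOuter d u v) := fun s => by
    simp only [map_add, map_smul, LinearMap.add_apply, LinearMap.smul_apply, h𝒜u, h𝒜v,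
      symOuter_comm v u]
    module
  have horth : ∀ s : ℝ, s ≠ 0 → ∀ p q, (u + s • v) ⬝ᵥ p = 0 → (u + s • v) ⬝ᵥ q = 0 →
      q ⬝ᵥ M *ᵥ p = 0 := fun s hs p q hp hq => by
    have h := h𝒜.dotProduct_mulVec_eq_zero hp hq
    rw [hline, Submodule.coe_smul, smul_mulVec, dotProduct_smul, smul_eq_mul] at h
    exact (mul_eq_zero.1 h).resolve_left (mul_ne_zero two_ne_zero hs)
  have hquad : ∀ s : ℝ, s ≠ 0 → ∀ p, (u + s • v) ⬝ᵥ p = 0 → p ⬝ᵥ M *ᵥ p = 0 :=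
    fun s hs p hp => horth s hs p p hp hp
  have e1 := hquad 1 one_ne_zero (u - v)
    (by simp [dotProduct_sub, add_dotProduct, hu, hv, huv, hvu])
  have e2 := hquad (-1) (by norm_num) (u + v)
    (by simp [dotProduct_add, add_dotProduct, hu, hv, huv, hvu])
  -- `e1` and `e2` still allow `M = c (uuᵀ - vvᵀ)`; the line through `u + 2v` excludes it
  have e3 := hquad 2 two_ne_zero ((2 : ℝ) • u - v)
    (by simp [dotProduct_sub, add_dotProduct, hu, hv, huv, hvu])
  have hdiag : u ⬝ᵥ M *ᵥ u = v ⬝ᵥ M *ᵥ v := by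
    simp only [mulVec_add, mulVec_sub, mulVec_smul, dotProduct_add, dotProduct_sub, add_dotProduct,
      sub_dotProduct, dotProduct_smul, smul_dotProduct, smul_eq_mul,
      hM.dotProduct_mulVec_comm v u] at e1 e2 e3
    linarith
  obtain ⟨w, hw⟩ := hM.exists_eq_vecMulVec_add_vecMulVec (hne (-1)) (horth (-1) (by norm_num))
  have hMuv : M *ᵥ (u + v) = (w ⬝ᵥ (u + v)) • (u + (-1 : ℝ) • v) := by
    rw [hw]
    simp only [add_mulVec, vecMulVec_mulVec, op_smul_eq_smul]
    simp [add_dotProduct, dotProduct_add, hu, hv, huv, hvu]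
  have hc : (u - v) ⬝ᵥ M *ᵥ (u + v) = 0 := by
    simp only [mulVec_add, dotProduct_add, sub_dotProduct, hM.dotProduct_mulVec_comm v u, hdiag]
    ring
  rw [hMuv] at hc
  simp [sub_dotProduct, dotProduct_add, hu, hv, huv, hvu] at hc
  have hMx : M *ᵥ (u + (1 : ℝ) • v) = 0 := by
    rw [one_smul, hMuv, dotProduct_add, hc, zero_smul]
  exact Subtype.ext (hM.eq_zero_of_mulVec_eq_zero (hne 1) hMx (horth 1 one_ne_zero))

theorem IsLyapunovLike.exists_eq_lyapunovMap {𝒜 : symMatrices d →ₗ[ℝ] symMatrices d}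
    (h𝒜 : IsLyapunovLike 𝒜) : ∃ A, 𝒜 = lyapunovMap A := by
  let e : Fin d → Fin d → ℝ := fun i => Pi.single i 1
  choose w hw using fun i => h𝒜.exists_eq_symOuter (x := e i) (by simp [e])
  -- `lyapunovMap A` sends `symOuter (e i) (e i)` to `2 • symOuter (A *ᵥ e i) (e i)`, hence `2⁻¹`
  set A : Matrix (Fin d) (Fin d) ℝ := (2⁻¹ : ℝ) • (Matrix.of w)ᵀ
  have hdiag : ∀ i, (𝒜 - lyapunovMap A) (symOuter d (e i) (e i)) = 0 := fun i => by
    have hAe : A *ᵥ e i = (2⁻¹ : ℝ) • w i := by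
      ext k
      simp [A, e]
    rw [LinearMap.sub_apply, hw i, lyapunovMap_symOuter, hAe, symOuter_comm (e i), sub_eq_zero]
    simp only [map_smul, LinearMap.smul_apply]
    module
  refine ⟨A, LinearMap.ext_symOuter_single fun i j => sub_eq_zero.1 ?_⟩
  rcases eq_or_ne i j with rfl | hij
  · exact hdiag i
  · exact (h𝒜.sub (isLyapunovLike_lyapunovMap A)).symOuter_eq_zero (by simp) (by simp)
      (by simp [hij]) (hdiag i) (hdiag j)

end SymmetricMatrices

theorem expOp_maps_psd_onto_iff_general (d : ℕ)
    (𝒜 : symMatrices d →ₗ[ℝ] symMatrices d) :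
    (∀ t : ℝ, 0 ≤ t → ⇑(opExp 𝒜 t) '' psdCone d = psdCone d) ↔
      ∃ A : Matrix (Fin d) (Fin d) ℝ, ∀ X : symMatrices d,
        ((𝒜 X : Matrix (Fin d) (Fin d) ℝ)) =
          A * (X : Matrix (Fin d) (Fin d) ℝ) + (X : Matrix (Fin d) (Fin d) ℝ) * Aᵀ := by
  refine (forall_image_exp_smul_eq_iff (LinearMap.toContinuousLinearMap 𝒜) (psdCone d)).trans
    ⟨fun h => ?_, fun ⟨A, hA⟩ => ?_⟩
  · obtain ⟨A, rfl⟩ := (isLyapunovLike_of_mapsTo_opExp h).exists_eq_lyapunovMap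
    exact ⟨A, fun X => rfl⟩
  · obtain rfl : 𝒜 = lyapunovMap A := LinearMap.ext fun X => Subtype.ext (hA X)
    exact mapsTo_opExp_lyapunovMap_psdCone A

/-- A linear map `𝒜 : S_d → S_d` satisfies `exp(t𝒜)(S_d^+) = S_d^+` for all
`t ≥ 0` if and only if there is a matrix `A ∈ M_d(ℝ)` with `𝒜X = AX + XAᵀ` for all
`X ∈ S_d`. -/
theorem expOp_maps_psd_onto_iff (d : ℕ) (hd : 1 ≤ d)
    (𝒜 : symMatrices d →ₗ[ℝ] symMatrices d) :
    (∀ t : ℝ, 0 ≤ t → ⇑(opExp 𝒜 t) '' psdCone d = psdCone d) ↔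
      ∃ A : Matrix (Fin d) (Fin d) ℝ, ∀ X : symMatrices d,
        ((𝒜 X : Matrix (Fin d) (Fin d) ℝ)) =
          A * (X : Matrix (Fin d) (Fin d) ℝ) + (X : Matrix (Fin d) (Fin d) ℝ) * Aᵀ :=
  expOp_maps_psd_onto_iff_general d 𝒜
end

section
/- There exist a matrix A ∈ M_2(ℝ) all of whose eigenvalues have strictly negative real part and a positive definite matrix γ ∈ S_2^{++} such that −Aγ − γAᵀ is not positive semidefinite. Concretely, for A = [[−1/10, −1/3], [−1/3, −2]] and γ = [[2, −2/3], [−2/3, 2]], the eigenvalues of A are −21/20 ± √3649/60 (both strictly negative), the eigenvalues of γ are 8/3 and 4/3 (so γ is positive definite), but −Aγ − γAᵀ has eigenvalues 169/45 ± √130/3, one of which is strictly negative, so −Aγ − γAᵀ ∉ S_2^+. -/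
/-! A real 2×2 matrix with negative trace and positive determinant has characteristic polynomial
`z² + bz + c` with `b, c > 0`, whose roots lie in the open left half-plane; `γ` is positive
definite by completing the square; yet the `(0,0)` entry of `−Aγ − γAᵀ` is `−1/45 < 0`. -/

open Matrix Polynomial

theorem Complex.re_neg_of_sq_add_mul_add_eq_zero {b c : ℝ} (hb : 0 < b) (hc : 0 < c) {z : ℂ}
    (hz : z ^ 2 + b * z + c = 0) : z.re < 0 := by
  have hre : z.re ^ 2 - z.im ^ 2 + b * z.re + c = 0 := by
    simpa [sq] using congrArg Complex.re hz
  have him : (2 * z.re + b) * z.im = 0 := by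
    linear_combination (by simpa [sq] using congrArg Complex.im hz : _ = _)
  rcases mul_eq_zero.mp him with hcrit | hreal
  · linarith
  · by_contra! hnonneg
    nlinarith

theorem Matrix.re_neg_of_isRoot_charpoly_map_fin_two (M : Matrix (Fin 2) (Fin 2) ℝ)
    (htr : M.trace < 0) (hdet : 0 < M.det) {z : ℂ}
    (hz : (M.map Complex.ofReal).charpoly.IsRoot z) : z.re < 0 := by
  have hquad : z ^ 2 + ((-M.trace : ℝ) : ℂ) * z + (M.det : ℂ) = 0 := by
    have := hz.eq_zero
    rw [show M.map Complex.ofReal = M.map Complex.ofRealHom from rfl, charpoly_map,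
      charpoly_fin_two] at this
    simpa [sub_eq_add_neg] using this
  exact Complex.re_neg_of_sq_add_mul_add_eq_zero (neg_pos.mpr htr) hdet hquad

theorem Matrix.posDef_fin_two_of {a b d : ℝ} (ha : 0 < a) (hdet : 0 < a * d - b ^ 2) :
    !![a, b; b, d].PosDef := by
  refine PosDef.of_dotProduct_mulVec_pos ?_ fun x hx => ?_
  · ext i j
    fin_cases i <;> fin_cases j <;> simp
  · set Q := x 0 * (a * x 0 + b * x 1) + x 1 * (b * x 0 + d * x 1)
    have hcompl : a * Q = (a * x 0 + b * x 1) ^ 2 + (a * d - b ^ 2) * x 1 ^ 2 := by ring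
    have haQ : 0 < a * Q := by
      rw [hcompl]
      rcases eq_or_ne (x 1) 0 with h1 | h1
      · have h0 : x 0 ≠ 0 := fun h0 => hx (by ext i; fin_cases i <;> simp [h0, h1])
        simp only [h1, mul_zero, add_zero, zero_pow two_ne_zero]
        positivity
      · exact add_pos_of_nonneg_of_pos (sq_nonneg _) (mul_pos hdet (sq_pos_of_ne_zero h1))
    simpa [dotProduct, mulVec, Fin.sum_univ_two] using pos_of_mul_pos_right haQ ha.le

/-- There exist `A ∈ M_2(ℝ)` all of whose (complex) eigenvalues have
strictly negative real part and a positive definite `γ ∈ S_2^{++}` such that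
`−Aγ − γAᵀ` is not positive semidefinite; concretely `A = [[−1/10, −1/3], [−1/3, −2]]`
and `γ = [[2, −2/3], [−2/3, 2]]`. -/
theorem exists_negative_spectrum_posDef_not_posSemidef :
    ∃ A γ : Matrix (Fin 2) (Fin 2) ℝ,
      A = !![-1/10, -1/3; -1/3, -2] ∧
      γ = !![2, -2/3; -2/3, 2] ∧
      (∀ z : ℂ, (Matrix.charpoly (A.map (Complex.ofReal))).IsRoot z → z.re < 0) ∧
      γ.PosDef ∧
      ¬ (-(A * γ) - γ * Aᵀ).PosSemidef := by
  refine ⟨_, _, rfl, rfl, fun z => re_neg_of_isRoot_charpoly_map_fin_two _ ?_ ?_,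
    posDef_fin_two_of (by norm_num) (by norm_num), fun h => ?_⟩
  · norm_num [trace_fin_two_of]
  · norm_num [det_fin_two_of]
  · have := h.diag_nonneg (i := 0)
    norm_num [mul_apply, vecMul, dotProduct, Fin.sum_univ_two] at this
end

section
/- Let d ∈ ℕ, d ≥ 1, and let ν be a (σ-finite) measure on ℝ^d that is concentrated on the nonnegative orthant [0, ∞)^d and satisfies ∫ ‖x‖² ν(dx) < ∞. Then the matrix ∫ x xᵀ ν(dx) ∈ M_d(ℝ) is completely positive. -/
open Matrix MeasureTheory

/-- A matrix `C ∈ M_d(ℝ)` is completely positive if `C = B * Bᵀ` for some `d × k` matrix `B`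
with nonnegative entries. -/
def CompletelyPositive {d : ℕ} (C : Matrix (Fin d) (Fin d) ℝ) : Prop :=
  ∃ (k : ℕ) (B : Matrix (Fin d) (Fin k) ℝ), (∀ i j, 0 ≤ B i j) ∧ C = B * Bᵀ

/-!
Writing `x xᵀ = ‖x‖² • (x / ‖x‖)(x / ‖x‖)ᵀ` turns `∫ x xᵀ dν` into an integral against the
finite measure `‖x‖² ν` of a function with values in the compact set
`S = {y yᵀ | y ≥ 0, ‖y‖ ≤ 1}`. By Jensen's inequality this integral is a nonnegative multiple of a
point of the closed convex hull of `S`, which in finite dimension is the convex hull itself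
(Carathéodory); and completely positive matrices form a convex cone containing `S`.
-/

open Set
open scoped NNReal Pointwise

/-- By Carathéodory, the hull is a finite union of continuous images of
`stdSimplex ℝ (Fin k) × s ^ k`, `k ≤ finrank ℝ E + 1`. -/
theorem IsCompact.convexHull {E : Type*} [AddCommGroup E] [Module ℝ E] [FiniteDimensional ℝ E]
    [TopologicalSpace E] [ContinuousAdd E] [ContinuousSMul ℝ E] {s : Set E}
    (hs : IsCompact s) : IsCompact (_root_.convexHull ℝ s) := by
  have hunion : _root_.convexHull ℝ s = ⋃ k : Fin (Module.finrank ℝ E + 2),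
      (fun q : (Fin k → ℝ) × (Fin k → E) => ∑ i, q.1 i • q.2 i) ''
        (stdSimplex ℝ (Fin k) ×ˢ univ.pi fun _ => s) := by
    refine Subset.antisymm (fun x hx => ?_) (iUnion_subset fun k => ?_)
    · obtain ⟨ι, _, z, w, hzs, hz, hw, hw1, rfl⟩ := eq_pos_convex_span_of_mem_convexHull hx
      have hcard : Fintype.card ι < Module.finrank ℝ E + 2 :=
        Nat.lt_succ_of_le (hz.card_le_finrank_succ.trans
          (Nat.succ_le_succ (Submodule.finrank_le _)))
      let e := (Fintype.equivFin ι).symm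
      refine mem_iUnion.2 ⟨⟨_, hcard⟩, (w ∘ e, z ∘ e), ⟨⟨fun i => (hw _).le, ?_⟩,
        fun i _ => hzs (mem_range_self _)⟩, e.sum_comp fun i => w i • z i⟩
      simpa [e.sum_comp] using hw1
    · rintro _ ⟨q, ⟨⟨hq0, hq1⟩, hqs⟩, rfl⟩
      exact (convex_convexHull ℝ s).sum_mem (fun i _ => hq0 i) hq1
        fun i _ => subset_convexHull ℝ s (hqs i trivial)
  rw [hunion]
  exact isCompact_iUnion fun k =>
    ((isCompact_stdSimplex ℝ _).prod (isCompact_univ_pi fun _ => hs)).image (by fun_prop)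

theorem Convex.integral_mem_measureReal_smul {α E : Type*} [MeasurableSpace α]
    [NormedAddCommGroup E] [NormedSpace ℝ E] [CompleteSpace E] {μ : Measure α} [IsFiniteMeasure μ]
    {s : Set E} {f : α → E} (hs : Convex ℝ s) (hsc : IsClosed s) (hne : s.Nonempty)
    (hf : ∀ᵐ x ∂μ, f x ∈ s) (hfi : Integrable f μ) : ∫ x, f x ∂μ ∈ μ.real univ • s := by
  rcases eq_or_ne μ 0 with rfl | hμ
  · simp [zero_smul_set hne]
  · have : NeZero μ := ⟨hμ⟩
    rw [← measure_smul_average]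
    exact smul_mem_smul_set (hs.average_mem hsc hf hfi)

theorem norm_inv_norm_smul_le_one {E : Type*} [SeminormedAddCommGroup E] [NormedSpace ℝ E]
    (x : E) : ‖‖x‖⁻¹ • x‖ ≤ 1 := by
  rw [norm_smul, norm_inv, norm_norm]
  exact inv_mul_le_one_of_le₀ le_rfl (norm_nonneg x)

theorem isFiniteMeasure_withDensity_sq_nnnorm {E : Type*} [SeminormedAddCommGroup E]
    [MeasurableSpace E] {ν : Measure E} (hint : Integrable (fun x => ‖x‖ ^ 2) ν) :
    IsFiniteMeasure (ν.withDensity fun x => (‖x‖₊ ^ 2 : ℝ≥0)) :=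
  isFiniteMeasure_withDensity <| by
    simpa [HasFiniteIntegral, enorm_pow, enorm_eq_nnnorm] using hint.hasFiniteIntegral.ne

namespace CompletelyPositive

variable {d : ℕ}

theorem of_mul_transpose {ι : Type*} [Fintype ι] {B : Matrix (Fin d) ι ℝ}
    (hB : ∀ i j, 0 ≤ B i j) : CompletelyPositive (B * Bᵀ) :=
  ⟨_, B.submatrix id (Fintype.equivFin ι).symm, fun _ _ => hB _ _,
    by rw [transpose_submatrix, submatrix_mul_equiv, submatrix_id_id]⟩

theorem vecMulVec_self {x : Fin d → ℝ} (hx : 0 ≤ x) : CompletelyPositive (vecMulVec x x) := by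
  rw [vecMulVec_eq Unit, ← transpose_replicateCol]
  exact of_mul_transpose fun i _ => hx i

theorem add {A C : Matrix (Fin d) (Fin d) ℝ} (hA : CompletelyPositive A)
    (hC : CompletelyPositive C) : CompletelyPositive (A + C) := by
  obtain ⟨_, B₁, hB₁, rfl⟩ := hA
  obtain ⟨_, B₂, hB₂, rfl⟩ := hC
  rw [← fromCols_mul_fromRows, ← transpose_fromCols]
  exact of_mul_transpose fun i j => j.rec (hB₁ i) (hB₂ i)

theorem smul {C : Matrix (Fin d) (Fin d) ℝ} (hC : CompletelyPositive C) {t : ℝ} (ht : 0 ≤ t) :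
    CompletelyPositive (t • C) := by
  obtain ⟨k, B, hB, rfl⟩ := hC
  refine ⟨k, √t • B, fun i j => mul_nonneg (Real.sqrt_nonneg t) (hB i j), ?_⟩
  rw [transpose_smul, smul_mul, Matrix.mul_smul, smul_smul, Real.mul_self_sqrt ht]

end CompletelyPositive

theorem convex_setOf_completelyPositive (d : ℕ) :
    Convex ℝ {C : Matrix (Fin d) (Fin d) ℝ | CompletelyPositive C} :=
  fun _ hA _ hC _ _ hs ht _ => (hA.smul hs).add (hC.smul ht)

theorem convexHull_image_outer_self_subset {d : ℕ} {K : Set (Fin d → ℝ)} (hK : K ⊆ Ici 0) :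
    convexHull ℝ ((fun y i j => y i * y j) '' K) ⊆ {C | CompletelyPositive (of C)} :=
  convexHull_min (image_subset_iff.2 fun _ hy => CompletelyPositive.vecMulVec_self (hK hy))
    (convex_setOf_completelyPositive d)

section Normalization

variable {n : Type*} [Fintype n] {ν : Measure (n → ℝ)}

theorem norm_outer_self_le (x : n → ℝ) : ‖fun i j => x i * x j‖ ≤ ‖x‖ ^ 2 :=
  (pi_norm_le_iff_of_nonneg (by positivity)).2 fun i =>
    (pi_norm_le_iff_of_nonneg (by positivity)).2 fun j => by
      rw [norm_mul, sq]
      exact mul_le_mul (norm_le_pi_norm x i) (norm_le_pi_norm x j) (norm_nonneg _) (norm_nonneg _)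

theorem sq_nnnorm_smul_outer_inv_norm_smul (x : n → ℝ) :
    (‖x‖₊ ^ 2 : ℝ≥0) • (fun i j => (‖x‖⁻¹ • x) i * (‖x‖⁻¹ • x) j) = fun i j => x i * x j := by
  rcases eq_or_ne x 0 with rfl | hx
  · ext; simp
  · ext i j
    have : ‖x‖ ≠ 0 := norm_ne_zero_iff.2 hx
    simp only [NNReal.smul_def, NNReal.coe_pow, coe_nnnorm, Pi.smul_apply, smul_eq_mul]
    field_simp

theorem integrable_outer_self (hint : Integrable (fun x => ‖x‖ ^ 2) ν) :
    Integrable (fun x i j => x i * x j) ν :=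
  hint.mono' (by fun_prop : Continuous fun x : n → ℝ => fun i j => x i * x j).aestronglyMeasurable
    (ae_of_all _ norm_outer_self_le)

theorem integral_outer_self_apply (hint : Integrable (fun x => ‖x‖ ^ 2) ν) (i j : n) :
    (∫ x, (fun i j => x i * x j) ∂ν) i j = ∫ x, x i * x j ∂ν := by
  have hrow := (integrable_outer_self hint).eval
  rw [eval_integral hrow, eval_integral (hrow i).eval]

theorem integral_outer_self_eq_integral_withDensity :
    ∫ x, (fun i j => x i * x j) ∂ν =
      ∫ x, (fun i j => (‖x‖⁻¹ • x) i * (‖x‖⁻¹ • x) j) ∂ν.withDensity fun x => (‖x‖₊ ^ 2 : ℝ≥0) := by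
  rw [integral_withDensity_eq_integral_smul (by fun_prop)]
  simp_rw [sq_nnnorm_smul_outer_inv_norm_smul]

theorem integrable_outer_inv_norm_smul_withDensity (hint : Integrable (fun x => ‖x‖ ^ 2) ν) :
    Integrable (fun x i j => (‖x‖⁻¹ • x) i * (‖x‖⁻¹ • x) j)
      (ν.withDensity fun x => (‖x‖₊ ^ 2 : ℝ≥0)) := by
  rw [integrable_withDensity_iff_integrable_smul (by fun_prop)]
  simp_rw [sq_nnnorm_smul_outer_inv_norm_smul]
  exact integrable_outer_self hint

theorem integral_outer_self_mem_smul_convexHull (hnonneg : ∀ᵐ x ∂ν, 0 ≤ x)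
    (hint : Integrable (fun x => ‖x‖ ^ 2) ν) :
    ∫ x, (fun i j => x i * x j) ∂ν ∈
      Ici (0 : ℝ) • convexHull ℝ
        ((fun (y : n → ℝ) i j => y i * y j) '' (Ici 0 ∩ Metric.closedBall 0 1)) := by
  set S := (fun (y : n → ℝ) i j => y i * y j) '' (Ici 0 ∩ Metric.closedBall 0 1)
  have hS : IsCompact S :=
    ((isCompact_closedBall 0 1).inter_left isClosed_Ici).image (by fun_prop)
  have hSne : S.Nonempty :=
    ⟨_, mem_image_of_mem _ ⟨self_mem_Ici, Metric.mem_closedBall_self zero_le_one⟩⟩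
  set μ := ν.withDensity fun x => (‖x‖₊ ^ 2 : ℝ≥0)
  have := isFiniteMeasure_withDensity_sq_nnnorm hint
  have hmem : ∀ᵐ x ∂μ, (fun i j => (‖x‖⁻¹ • x) i * (‖x‖⁻¹ • x) j) ∈ convexHull ℝ S := by
    filter_upwards [(withDensity_absolutelyContinuous ν _).ae_le hnonneg] with x hx
    refine subset_convexHull ℝ S (mem_image_of_mem _ ⟨?_, ?_⟩)
    · exact smul_nonneg (inv_nonneg.2 (norm_nonneg x)) hx
    · simpa using norm_inv_norm_smul_le_one x
  obtain ⟨C, hC, hCeq⟩ := (convex_convexHull ℝ S).integral_mem_measureReal_smul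
    hS.convexHull.isClosed (hSne.mono (subset_convexHull ℝ S)) hmem
    (integrable_outer_inv_norm_smul_withDensity hint)
  rw [integral_outer_self_eq_integral_withDensity, ← hCeq]
  exact smul_mem_smul measureReal_nonneg hC

end Normalization

theorem secondMoment_completelyPositive_general (d : ℕ)
    (ν : Measure (Fin d → ℝ))
    (hconc : ν {x : Fin d → ℝ | ¬ ∀ i, 0 ≤ x i} = 0)
    (hint : Integrable (fun x : Fin d → ℝ => ‖x‖ ^ 2) ν) :
    CompletelyPositive (Matrix.of fun i j : Fin d => ∫ x, x i * x j ∂ν) := by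
  obtain ⟨t, ht, C, hC, hCeq⟩ := integral_outer_self_mem_smul_convexHull (ae_iff.2 hconc) hint
  have hentries : (of fun i j => ∫ x, x i * x j ∂ν) = of (∫ x, (fun i j => x i * x j) ∂ν) :=
    ext fun i j => (integral_outer_self_apply hint i j).symm
  rw [hentries, ← hCeq]
  exact (convexHull_image_outer_self_subset inter_subset_left hC).smul ht

/-- If `ν` is a σ-finite measure on `ℝ^d` concentrated on the nonnegative
orthant with `∫ ‖x‖² ν(dx) < ∞`, then the second-moment matrix `∫ x xᵀ ν(dx)` is
completely positive. -/
theorem secondMoment_completelyPositive (d : ℕ) (hd : 1 ≤ d)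
    (ν : Measure (Fin d → ℝ)) [SigmaFinite ν]
    (hconc : ν {x : Fin d → ℝ | ¬ ∀ i, 0 ≤ x i} = 0)
    (hint : Integrable (fun x : Fin d → ℝ => ‖x‖ ^ 2) ν) :
    CompletelyPositive (Matrix.of fun i j : Fin d => ∫ x, x i * x j ∂ν) :=
  secondMoment_completelyPositive_general d ν hconc hint
end

section
/- Let d ∈ ℕ, d ≥ 1, let C ∈ S_d^+, and let ρ be a measure on (0, ∞) with ∫ τ² ρ(dτ) < ∞. Define the measure ν on ℝ^d by ν(B) = ∫_{(0,∞)} N_{τC}(B) ρ(dτ) for Borel sets B, where N_{τC} denotes the centered Gaussian distribution on ℝ^d with covariance matrix τC. Then ∫ x xᵀ ν(dx) = (∫ τ ρ(dτ)) C and ∫ vec(x xᵀ) vec(x xᵀ)ᵀ ν(dx) = (∫ τ² ρ(dτ)) (C ⊗ C + K_d (C ⊗ C) + vec(C) vec(C)ᵀ). -/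
open Matrix MeasureTheory ProbabilityTheory
open scoped Kronecker

/-- The vectorisation operator `vec` stacking the columns of a `d × d` matrix below one
another; the entry of `vec A` at index `(j, i)` is `A i j`. -/
def vecOp {d : ℕ} (A : Matrix (Fin d) (Fin d) ℝ) : Fin d × Fin d → ℝ :=
  fun p => A p.2 p.1

/-- The commutation matrix `K_d`, characterised by `K_d * vec A = vec Aᵀ` for all
`A ∈ M_d(ℝ)`. -/
def commutationMatrix (d : ℕ) : Matrix (Fin d × Fin d) (Fin d × Fin d) ℝ :=
  Matrix.of fun p q => if p.1 = q.2 ∧ p.2 = q.1 then 1 else 0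

/-- The standard Gaussian distribution on `ℝ^d` (product of `d` standard normals). -/
noncomputable def stdGaussian (d : ℕ) : Measure (Fin d → ℝ) :=
  Measure.pi fun _ => gaussianReal 0 1

/-- The centered Gaussian distribution `N_{τC}` on `ℝ^d` with covariance matrix `τ C`
(for `τ > 0` and `C ∈ S_d^+`), realised as the image of the standard Gaussian under
`x ↦ (τ C)^{1/2} x = √τ C^{1/2} x`. -/
noncomputable def gaussianScaled {d : ℕ} {C : Matrix (Fin d) (Fin d) ℝ}
    (hC : C.PosSemidef) (τ : ℝ) : Measure (Fin d → ℝ) :=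
  (stdGaussian d).map fun x => Real.sqrt τ • ((hC.1.eigenvectorUnitary : Matrix (Fin d) (Fin d) ℝ) *
    Matrix.diagonal (fun i => Real.sqrt (hC.1.eigenvalues i)) *
    (star hC.1.eigenvectorUnitary : Matrix (Fin d) (Fin d) ℝ)).mulVec x


/-!
Under `ν`, `x` has the law of `√τ • Y` with `τ ∼ ρ` independent of `Y ∼ N(0, C)`: `ν` is the image
of `ρ ⊗ N(0, C)` under `(τ, y) ↦ √τ • y`, a genuine product because `ρ` is σ-finite (`τ²` is
integrable and `ρ` lives on `(0, ∞)`). A moment of degree `2n` in `x` therefore factors as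
`∫ τⁿ dρ` times the same moment of `N(0, C)`. Writing `Y = C^{1/2} X` with `X` standard, these
reduce to `E[Xₖ Xₗ] = δₖₗ` and Isserlis' formula `E[Xₖ Xₗ Xₘ Xₙ] = δₖₗ δₘₙ + δₖₘ δₗₙ + δₖₙ δₗₘ`,
which follow from the independence of the coordinates and the moments `0, 1, 0, 3` of `N(0, 1)`,
the derivatives at `0` of its moment generating function `exp (t² / 2)`.
-/

open Real

section StandardNormal

lemma integral_pow_gaussianReal_eq_iteratedDeriv (n : ℕ) :
    ∫ x, x ^ n ∂gaussianReal 0 1 = iteratedDeriv n (fun t => rexp (t ^ 2 / 2)) 0 := by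
  have h := iteratedDeriv_mgf_zero (X := fun x : ℝ => x) (μ := gaussianReal 0 1) (by simp) n
  rw [mgf_fun_id_gaussianReal] at h
  simpa using h.symm

lemma integrable_pow_gaussianReal (n : ℕ) : Integrable (fun x : ℝ => x ^ n) (gaussianReal 0 1) :=
  integrable_pow_of_mem_interior_integrableExpSet (X := fun x => x) (by simp) n

lemma deriv_mul_exp_sq_half {p p' : ℝ → ℝ} (hp : ∀ t, HasDerivAt p (p' t) t) :
    deriv (fun t => p t * rexp (t ^ 2 / 2)) = fun t => (p' t + t * p t) * rexp (t ^ 2 / 2) := by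
  funext t
  have h := (hp t).mul ((hasDerivAt_pow 2 t).div_const 2).exp
  rw [show (fun t => p t * rexp (t ^ 2 / 2)) = p * fun t => rexp (t ^ 2 / 2) from rfl, h.deriv]
  push_cast
  ring

lemma iteratedDeriv_one_exp_sq_half :
    iteratedDeriv 1 (fun t => rexp (t ^ 2 / 2)) = fun t => t * rexp (t ^ 2 / 2) := by
  rw [iteratedDeriv_one]
  simpa using deriv_mul_exp_sq_half (p := fun _ => 1) fun t => hasDerivAt_const t 1

lemma iteratedDeriv_two_exp_sq_half :
    iteratedDeriv 2 (fun t => rexp (t ^ 2 / 2)) = fun t => (1 + t ^ 2) * rexp (t ^ 2 / 2) := by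
  rw [iteratedDeriv_succ, iteratedDeriv_one_exp_sq_half,
    deriv_mul_exp_sq_half (p := fun t => t) hasDerivAt_id]
  ext t
  ring

lemma iteratedDeriv_three_exp_sq_half :
    iteratedDeriv 3 (fun t => rexp (t ^ 2 / 2)) = fun t => (3 * t + t ^ 3) * rexp (t ^ 2 / 2) := by
  rw [iteratedDeriv_succ, iteratedDeriv_two_exp_sq_half,
    deriv_mul_exp_sq_half (p := fun t => 1 + t ^ 2) fun t => (hasDerivAt_pow 2 t).const_add 1]
  ext t
  push_cast
  ring

lemma iteratedDeriv_four_exp_sq_half :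
    iteratedDeriv 4 (fun t => rexp (t ^ 2 / 2)) =
      fun t => (3 + 6 * t ^ 2 + t ^ 4) * rexp (t ^ 2 / 2) := by
  rw [iteratedDeriv_succ, iteratedDeriv_three_exp_sq_half,
    deriv_mul_exp_sq_half (p := fun t => 3 * t + t ^ 3)
      fun t => ((hasDerivAt_id t).const_mul 3).add (hasDerivAt_pow 3 t)]
  ext t
  push_cast
  ring

end StandardNormal

section Multiplicities

variable {ι : Type*} [Fintype ι] [DecidableEq ι]

lemma List.prod_map_eq_prod_pow_count {M : Type*} [CommMonoid M] (l : List ι) (x : ι → M) :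
    (l.map x).prod = ∏ i, x i ^ l.count i := by
  rw [Finset.prod_list_map_count]
  exact Finset.prod_subset (Finset.subset_univ _) fun i _ hi => by
    rw [List.count_eq_zero.2 (by simpa using hi), pow_zero]

lemma prod_apply_count_pair_eq {G : ℕ → ℝ} (h0 : G 0 = 1) (h1 : G 1 = 0) (h2 : G 2 = 1)
    (k l : ι) : ∏ i, G ([k, l].count i) = (1 : Matrix ι ι ℝ) k l := by
  rw [← Finset.prod_subset (Finset.subset_univ [k, l].toFinset)
    fun i _ hi => by rw [List.count_eq_zero.2 (by simpa using hi), h0]]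
  by_cases hkl : k = l <;> subst_vars <;> simp_all [List.count_cons, Finset.prod_insert]

lemma prod_apply_count_quadruple_eq {G : ℕ → ℝ} (h0 : G 0 = 1) (h1 : G 1 = 0) (h2 : G 2 = 1)
    (h3 : G 3 = 0) (h4 : G 4 = 3) (k l m n : ι) :
    ∏ i, G ([k, l, m, n].count i) =
      (1 : Matrix ι ι ℝ) k l * (1 : Matrix ι ι ℝ) m n +
      (1 : Matrix ι ι ℝ) k m * (1 : Matrix ι ι ℝ) l n +
      (1 : Matrix ι ι ℝ) k n * (1 : Matrix ι ι ℝ) l m := by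
  rw [← Finset.prod_subset (Finset.subset_univ [k, l, m, n].toFinset)
    fun i _ hi => by rw [List.count_eq_zero.2 (by simpa using hi), h0]]
  by_cases hkl : k = l <;> by_cases hkm : k = m <;> by_cases hkn : k = n <;>
    by_cases hlm : l = m <;> by_cases hln : l = n <;> by_cases hmn : m = n <;>
    subst_vars <;> simp_all [List.count_cons, Finset.prod_insert] <;>
    simp_all [eq_comm, one_add_one_eq_two, two_add_one_eq_three]

end Multiplicities

section StdGaussian

variable {d : ℕ}

instance : IsProbabilityMeasure (stdGaussian d) := by
  unfold _root_.stdGaussian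
  infer_instance

lemma integrable_list_prod_stdGaussian (l : List (Fin d)) :
    Integrable (fun x => (l.map x).prod) (stdGaussian d) := by
  simp_rw [List.prod_map_eq_prod_pow_count]
  exact Integrable.fintype_prod fun i => integrable_pow_gaussianReal _

lemma integral_list_prod_stdGaussian (l : List (Fin d)) :
    ∫ x, (l.map x).prod ∂stdGaussian d = ∏ i, ∫ t, t ^ l.count i ∂gaussianReal 0 1 := by
  simp_rw [List.prod_map_eq_prod_pow_count]
  exact integral_fintype_prod_eq_prod fun i (t : ℝ) => t ^ l.count i

lemma integral_mul_stdGaussian (k l : Fin d) :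
    ∫ x, x k * x l ∂stdGaussian d = (1 : Matrix (Fin d) (Fin d) ℝ) k l := by
  have h := integral_list_prod_stdGaussian [k, l]
  simp only [List.map_cons, List.map_nil, List.prod_cons, List.prod_nil, mul_one] at h
  rw [h]
  refine prod_apply_count_pair_eq (G := fun n => ∫ t, t ^ n ∂gaussianReal 0 1) ?_ ?_ ?_ k l <;>
    simp [integral_pow_gaussianReal_eq_iteratedDeriv, iteratedDeriv_two_exp_sq_half]

lemma integral_mul_mul_mul_stdGaussian (k l m n : Fin d) :
    ∫ x, x k * x l * x m * x n ∂stdGaussian d =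
      (1 : Matrix (Fin d) (Fin d) ℝ) k l * (1 : Matrix (Fin d) (Fin d) ℝ) m n +
      (1 : Matrix (Fin d) (Fin d) ℝ) k m * (1 : Matrix (Fin d) (Fin d) ℝ) l n +
      (1 : Matrix (Fin d) (Fin d) ℝ) k n * (1 : Matrix (Fin d) (Fin d) ℝ) l m := by
  have h := integral_list_prod_stdGaussian [k, l, m, n]
  simp only [List.map_cons, List.map_nil, List.prod_cons, List.prod_nil, mul_one] at h
  simp only [mul_assoc]
  rw [h]
  refine prod_apply_count_quadruple_eq (G := fun n => ∫ t, t ^ n ∂gaussianReal 0 1)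
    ?_ ?_ ?_ ?_ ?_ k l m n <;>
    simp [integral_pow_gaussianReal_eq_iteratedDeriv, iteratedDeriv_two_exp_sq_half,
      iteratedDeriv_three_exp_sq_half, iteratedDeriv_four_exp_sq_half]

lemma integral_dotProduct_mul_dotProduct_stdGaussian (u v : Fin d → ℝ) :
    ∫ x, (u ⬝ᵥ x) * (v ⬝ᵥ x) ∂stdGaussian d = u ⬝ᵥ v := by
  have hexp : ∀ x : Fin d → ℝ, (u ⬝ᵥ x) * (v ⬝ᵥ x) = ∑ k, ∑ l, u k * v l * (x k * x l) := by
    intro x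
    simp only [dotProduct, Finset.sum_mul_sum]
    exact Finset.sum_congr rfl fun _ _ => Finset.sum_congr rfl fun _ _ => by ring
  have hint : ∀ k l, Integrable (fun x : Fin d → ℝ => u k * v l * (x k * x l)) (stdGaussian d) :=
    fun k l => by simpa using (integrable_list_prod_stdGaussian [k, l]).const_mul (u k * v l)
  simp_rw [hexp]
  rw [integral_finsetSum _ fun k _ => integrable_finsetSum _ fun l _ => hint k l]
  simp_rw [integral_finsetSum _ fun l _ => hint _ l, integral_const_mul, integral_mul_stdGaussian]
  simp [Matrix.one_apply, dotProduct]

lemma integral_four_dotProduct_mul_stdGaussian (u v w z : Fin d → ℝ) :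
    ∫ x, (u ⬝ᵥ x) * (v ⬝ᵥ x) * (w ⬝ᵥ x) * (z ⬝ᵥ x) ∂stdGaussian d =
      (u ⬝ᵥ v) * (w ⬝ᵥ z) + (u ⬝ᵥ w) * (v ⬝ᵥ z) + (u ⬝ᵥ z) * (v ⬝ᵥ w) := by
  have hexp : ∀ x : Fin d → ℝ, (u ⬝ᵥ x) * (v ⬝ᵥ x) * (w ⬝ᵥ x) * (z ⬝ᵥ x) =
      ∑ n, ∑ m, ∑ l, ∑ k, u k * v l * w m * z n * (x k * x l * x m * x n) := by
    intro x
    simp only [dotProduct, Finset.sum_mul, Finset.mul_sum]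
    exact Finset.sum_congr rfl fun _ _ => Finset.sum_congr rfl fun _ _ =>
      Finset.sum_congr rfl fun _ _ => Finset.sum_congr rfl fun _ _ => by ring
  have hint : ∀ k l m n, Integrable (fun x : Fin d → ℝ =>
      u k * v l * w m * z n * (x k * x l * x m * x n)) (stdGaussian d) := fun k l m n => by
    simpa [mul_assoc] using
      (integrable_list_prod_stdGaussian [k, l, m, n]).const_mul (u k * v l * w m * z n)
  simp_rw [hexp]
  rw [integral_finsetSum _ fun n _ => integrable_finsetSum _ fun m _ =>
    integrable_finsetSum _ fun l _ => integrable_finsetSum _ fun k _ => hint k l m n]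
  simp_rw [integral_finsetSum _ fun _ _ => integrable_finsetSum _ fun _ _ =>
      integrable_finsetSum _ fun _ _ => hint _ _ _ _,
    integral_finsetSum _ fun _ _ => integrable_finsetSum _ fun _ _ => hint _ _ _ _,
    integral_finsetSum _ fun _ _ => hint _ _ _ _, integral_const_mul,
    integral_mul_mul_mul_stdGaussian]
  simp [Matrix.one_apply, dotProduct, mul_add, Finset.sum_add_distrib, Finset.sum_mul_sum,
    mul_comm, mul_left_comm]
  congr 1 <;> exact Finset.sum_comm

variable {ι : Type*} [Fintype ι] (A : Matrix ι (Fin d) ℝ)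

lemma integral_apply_mul_apply_map_mulVec_stdGaussian (a b : ι) :
    ∫ y, y a * y b ∂(stdGaussian d).map (A *ᵥ ·) = (A * Aᵀ) a b := by
  rw [integral_map (by fun_prop) (by fun_prop)]
  exact integral_dotProduct_mul_dotProduct_stdGaussian (A a) (A b)

lemma integral_four_apply_mul_map_mulVec_stdGaussian (a b c e : ι) :
    ∫ y, y a * y b * y c * y e ∂(stdGaussian d).map (A *ᵥ ·) =
      (A * Aᵀ) a b * (A * Aᵀ) c e + (A * Aᵀ) a c * (A * Aᵀ) b e + (A * Aᵀ) a e * (A * Aᵀ) b c := by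
  rw [integral_map (by fun_prop) (by fun_prop)]
  exact integral_four_dotProduct_mul_stdGaussian (A a) (A b) (A c) (A e)

end StdGaussian

section SquareRoot

variable {n : Type*} [Fintype n] [DecidableEq n]

lemma Matrix.transpose_cfc (f : ℝ → ℝ) (C : Matrix n n ℝ) : (cfc f C)ᵀ = cfc f C := by
  have h := (cfc_predicate f C).star_eq
  rwa [star_eq_conjTranspose, conjTranspose_eq_transpose_of_trivial] at h

lemma Matrix.PosSemidef.cfc_sqrt_mul_self {C : Matrix n n ℝ} (hC : C.PosSemidef) :
    cfc Real.sqrt C * cfc Real.sqrt C = C := by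
  conv_rhs => rw [← cfc_id' ℝ C hC.1.isSelfAdjoint]
  rw [← cfc_mul Real.sqrt Real.sqrt C]
  refine cfc_congr fun x hx => Real.mul_self_sqrt ?_
  obtain ⟨i, rfl⟩ := hC.1.spectrum_real_eq_range_eigenvalues ▸ hx
  exact hC.eigenvalues_nonneg i

lemma gaussianScaled_eq_map_smul {d : ℕ} {C : Matrix (Fin d) (Fin d) ℝ} (hC : C.PosSemidef)
    (τ : ℝ) : gaussianScaled hC τ = ((stdGaussian d).map (cfc Real.sqrt C *ᵥ ·)).map (√τ • ·) := by
  rw [Measure.map_map (measurable_const_smul _) (by fun_prop), hC.1.cfc_eq]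
  rfl

end SquareRoot

section ScaleMixture

lemma Measure.sigmaFinite_of_integrable_of_ae_ne_zero {α : Type*} [MeasurableSpace α]
    {μ : Measure α} {f : α → ℝ} (hf : Integrable f μ) (h : ∀ᵐ x ∂μ, f x ≠ 0) :
    SigmaFinite μ := by
  refine Measure.sigmaFinite_of_countable (S := insert {x | f x = 0} (Set.range fun n : ℕ =>
    {x | 1 / (n + 1 : ℝ) ≤ ‖f x‖})) ((Set.countable_range _).insert _) ?_ ?_
  · rintro s (rfl | ⟨n, rfl⟩)
    · have h0 : μ {x | f x = 0} = 0 := by simpa [ae_iff] using h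
      simp [h0]
    · exact hf.measure_norm_ge_lt_top (by positivity)
  · refine Set.eq_univ_of_forall fun x => ?_
    by_cases hx : f x = 0
    · exact Set.mem_sUnion_of_mem hx (Set.mem_insert _ _)
    · obtain ⟨n, hn⟩ := exists_nat_one_div_lt (norm_pos_iff.2 hx)
      exact Set.mem_sUnion_of_mem (show _ from hn.le) (Set.mem_insert_of_mem _ ⟨n, rfl⟩)

variable {E : Type*} [NormedAddCommGroup E] [NormedSpace ℝ E] [MeasurableSpace E] [BorelSpace E]
  [SecondCountableTopology E]

lemma measurable_sqrt_fst_smul_snd : Measurable fun p : ℝ × E => √p.1 • p.2 := by fun_prop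

lemma bind_map_sqrt_smul_eq_map_prod (ρ : Measure ℝ) (μ : Measure E) [SFinite μ] :
    (ρ.bind fun τ => μ.map (√τ • ·)) = (ρ.prod μ).map fun p => √p.1 • p.2 := by
  have hκ : Measurable fun τ : ℝ => μ.map (√τ • ·) := by
    have h : (fun τ : ℝ => μ.map (√τ • ·)) =
        fun τ => (μ.map (Prod.mk τ)).map fun p => √p.1 • p.2 :=
      funext fun τ => by rw [Measure.map_map measurable_sqrt_fst_smul_snd measurable_prodMk_left]; rfl
    exact h ▸ (Measure.measurable_map _ measurable_sqrt_fst_smul_snd).comp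
      Measurable.map_prodMk_left
  ext s hs
  rw [Measure.bind_apply hs hκ.aemeasurable, Measure.map_apply measurable_sqrt_fst_smul_snd hs,
    Measure.prod_apply (measurable_sqrt_fst_smul_snd hs)]
  refine lintegral_congr fun τ => ?_
  rw [Measure.map_apply (measurable_const_smul _) hs]
  rfl

/-- No integrability is assumed: when `τ ↦ τ ^ n` or `g` is not integrable, both sides are `0`. -/
theorem integral_bind_map_sqrt_smul (ρ : Measure ℝ) [SFinite ρ] (hρ : ∀ᵐ τ ∂ρ, 0 ≤ τ)
    (μ : Measure E) [SFinite μ] {g : E → ℝ} (hg : Measurable g) {n : ℕ}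
    (hg_hom : ∀ (c : ℝ) y, g (c • y) = c ^ (2 * n) * g y) :
    ∫ x, g x ∂(ρ.bind fun τ => μ.map (√τ • ·)) = (∫ τ, τ ^ n ∂ρ) * ∫ y, g y ∂μ := by
  rw [bind_map_sqrt_smul_eq_map_prod, integral_map measurable_sqrt_fst_smul_snd.aemeasurable
    hg.aestronglyMeasurable, ← integral_prod_mul]
  refine integral_congr_ae ?_
  filter_upwards [Measure.quasiMeasurePreserving_fst.ae hρ] with p hp
  rw [hg_hom, pow_mul, sq_sqrt hp]

end ScaleMixture

lemma commutationMatrix_mul_apply {d : ℕ} (M : Matrix (Fin d × Fin d) (Fin d × Fin d) ℝ)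
    (p q : Fin d × Fin d) : (commutationMatrix d * M) p q = M p.swap q := by
  rw [Matrix.mul_apply, Finset.sum_eq_single p.swap]
  · simp [commutationMatrix]
  · rintro r - hr
    have : ¬(p.1 = r.2 ∧ p.2 = r.1) := fun h => hr (Prod.ext h.2.symm h.1.symm)
    simp [commutationMatrix, this]
  · simp

lemma kroneckerMap_add_commutationMatrix_mul_add_vecMulVec_apply {d : ℕ}
    {C : Matrix (Fin d) (Fin d) ℝ} (hC : C.IsSymm) (p q : Fin d × Fin d) :
    (C ⊗ₖ C + commutationMatrix d * (C ⊗ₖ C) + vecMulVec (vecOp C) (vecOp C)) p q =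
      C p.1 q.1 * C p.2 q.2 + C p.1 p.2 * C q.1 q.2 + C p.1 q.2 * C q.1 p.2 := by
  simp only [Matrix.add_apply, commutationMatrix_mul_apply, kroneckerMap_apply, vecMulVec_apply,
    vecOp, Prod.fst_swap, Prod.snd_swap]
  rw [hC.apply q.1 p.2, hC.apply p.1 p.2, hC.apply q.1 q.2]
  ring

theorem gaussian_mixture_second_and_fourth_moments_general (d : ℕ)
    (C : Matrix (Fin d) (Fin d) ℝ) (hC : C.PosSemidef)
    (ρ : Measure ℝ) (hρconc : ρ {τ : ℝ | τ ∉ Set.Ioi (0 : ℝ)} = 0)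
    (hρsq : Integrable (fun τ : ℝ => τ ^ 2) ρ)
    (ν : Measure (Fin d → ℝ)) (hν : ν = ρ.bind fun τ => gaussianScaled hC τ) :
    (∀ i j : Fin d,
      ∫ x, x i * x j ∂ν = (∫ τ, τ ∂ρ) * C i j) ∧
    (∀ p q : Fin d × Fin d,
      ∫ x, ((Matrix.vecMulVec x x) ⊗ₖ (Matrix.vecMulVec x x)) p q ∂ν =
        (∫ τ, τ ^ 2 ∂ρ) *
          (C ⊗ₖ C + commutationMatrix d * (C ⊗ₖ C) +
            Matrix.vecMulVec (vecOp C) (vecOp C)) p q) := by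
  have hρ_pos : ∀ᵐ τ ∂ρ, 0 < τ := ae_iff.2 hρconc
  have hρ_nonneg : ∀ᵐ τ ∂ρ, 0 ≤ τ := hρ_pos.mono fun _ => le_of_lt
  have : SigmaFinite ρ :=
    Measure.sigmaFinite_of_integrable_of_ae_ne_zero hρsq (hρ_pos.mono fun _ hτ => by positivity)
  have hsqrt : cfc Real.sqrt C * (cfc Real.sqrt C)ᵀ = C := by
    rw [Matrix.transpose_cfc, hC.cfc_sqrt_mul_self]
  simp_rw [hν, gaussianScaled_eq_map_smul hC]
  refine ⟨fun i j => ?_, fun p q => ?_⟩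
  · rw [integral_bind_map_sqrt_smul ρ hρ_nonneg _ (by fun_prop) (n := 1)
      (fun c y => by simp only [Pi.smul_apply, smul_eq_mul]; ring),
      integral_apply_mul_apply_map_mulVec_stdGaussian, hsqrt]
    simp only [pow_one]
  · simp only [kroneckerMap_apply, vecMulVec_apply, ← mul_assoc]
    rw [integral_bind_map_sqrt_smul ρ hρ_nonneg _ (by fun_prop) (n := 2)
      (fun c y => by simp only [Pi.smul_apply, smul_eq_mul]; ring),
      integral_four_apply_mul_map_mulVec_stdGaussian, hsqrt,
      kroneckerMap_add_commutationMatrix_mul_add_vecMulVec_apply (isHermitian_iff_isSymm.1 hC.1)]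

/-- Let `ρ` be a measure on `(0, ∞)` with `∫ τ² ρ(dτ) < ∞` and let
`ν(B) = ∫ N_{τC}(B) ρ(dτ)` be the corresponding Gaussian mixture on `ℝ^d`. Then
`∫ x xᵀ ν(dx) = (∫ τ ρ(dτ)) C` and
`∫ vec(x xᵀ) vec(x xᵀ)ᵀ ν(dx) = (∫ τ² ρ(dτ)) (C ⊗ C + K_d (C ⊗ C) + vec(C) vec(C)ᵀ)`. -/
theorem gaussian_mixture_second_and_fourth_moments (d : ℕ) (hd : 1 ≤ d)
    (C : Matrix (Fin d) (Fin d) ℝ) (hC : C.PosSemidef)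
    (ρ : Measure ℝ) (hρconc : ρ {τ : ℝ | τ ∉ Set.Ioi (0 : ℝ)} = 0)
    (hρsq : Integrable (fun τ : ℝ => τ ^ 2) ρ)
    (ν : Measure (Fin d → ℝ)) (hν : ν = ρ.bind fun τ => gaussianScaled hC τ) :
    (∀ i j : Fin d,
      ∫ x, x i * x j ∂ν = (∫ τ, τ ∂ρ) * C i j) ∧
    (∀ p q : Fin d × Fin d,
      ∫ x, ((Matrix.vecMulVec x x) ⊗ₖ (Matrix.vecMulVec x x)) p q ∂ν =
        (∫ τ, τ ^ 2 ∂ρ) *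
          (C ⊗ₖ C + commutationMatrix d * (C ⊗ₖ C) +
            Matrix.vecMulVec (vecOp C) (vecOp C)) p q) :=
  gaussian_mixture_second_and_fourth_moments_general d C hC ρ hρconc hρsq ν hν
end
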